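/- arXiv:math/0702424 — 8 statements merged into one kernel-verified Lean document; each statement's English description precedes it below -/
import Mathlib

section
/- Let U and V be subspaces of E with U ≠ 0. Then the gap δ(U,V) = sup{ dist(u, V) : u ∈ U, ‖u‖ = 1 } satisfies δ(U,V) = ‖P_{V⊥} ∘ P_U‖ = ‖P_U − P_V ∘ P_U‖ = ‖P_U − P_U ∘ P_V‖. -/
/-!
The distance from `u` to `V` is `‖P_{V⊥} u‖`, so the supremum defining `δ(U,V)` is the norm of
`P_{V⊥}` restricted to `U`; as `P_U` is a contraction fixing `U`, this is `‖P_{V⊥} ∘ P_U‖`.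
Writing `P_{V⊥} = 1 - P_V` gives the second expression, and taking adjoints (which preserves
the operator norm and fixes orthogonal projections) gives the third.
-/

open Module Submodule

noncomputable section

variable {E : Type*} [NormedAddCommGroup E] [InnerProductSpace ℝ E] [FiniteDimensional ℝ E]

/-- The orthogonal projection onto a subspace `U`, viewed as a continuous linear
endomorphism of `E`. -/
noncomputable def projCLM (U : Submodule ℝ E) : E →L[ℝ] E :=
  U.subtypeL.comp (orthogonalProjection U)

/-- The gap `δ(U,V) := ‖P_U - P_V ∘ P_U‖` between two subspaces. -/
noncomputable def gap (U V : Submodule ℝ E) : ℝ :=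
  ‖projCLM U - (projCLM V).comp (projCLM U)‖

theorem projCLM_eq_starProjection (U : Submodule ℝ E) : projCLM U = U.starProjection := rfl

theorem norm_sub_mul_eq_norm_sub_mul_of_isSelfAdjoint {R : Type*} [NonUnitalNormedRing R]
    [StarRing R] [NormedStarGroup R] {a b : R} (ha : IsSelfAdjoint a) (hb : IsSelfAdjoint b) :
    ‖a - b * a‖ = ‖a - a * b‖ := by
  rw [← norm_star, star_sub, star_mul, ha.star_eq, hb.star_eq]

namespace Submodule

variable {𝕜 E F : Type*} [RCLike 𝕜] [NormedAddCommGroup E] [InnerProductSpace 𝕜 E]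
  [NormedAddCommGroup F] [NormedSpace 𝕜 F] (K : Submodule 𝕜 E) [K.HasOrthogonalProjection]

theorem infDist_eq_norm_starProjection_orthogonal (x : E) :
    Metric.infDist x K = ‖Kᗮ.starProjection x‖ := by
  rw [Metric.infDist_eq_iInf, starProjection_orthogonal_val, starProjection_minimal]
  simp only [dist_eq_norm]
  rfl

theorem norm_comp_starProjection (T : E →L[𝕜] F) :
    ‖T ∘L K.starProjection‖ = ‖T ∘L K.subtypeL‖ := by
  have hrestrict : (T ∘L K.starProjection) ∘L K.subtypeL = T ∘L K.subtypeL := by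
    ext x
    simp
  apply le_antisymm
  · exact ((T ∘L K.subtypeL).opNorm_comp_le _).trans
      (mul_le_of_le_one_right (norm_nonneg _) K.orthogonalProjectionOnto_norm_le)
  · rw [← hrestrict]
    exact ((T ∘L K.starProjection).opNorm_comp_le _).trans
      (mul_le_of_le_one_right (norm_nonneg _) (norm_subtypeL_le K))

theorem sSup_norm_apply_unit_eq_norm_comp_starProjection (T : E →L[𝕜] F) :
    sSup {r : ℝ | ∃ u ∈ (K : Set E), ‖u‖ = 1 ∧ r = ‖T u‖} = ‖T ∘L K.starProjection‖ := by
  have hset : {r : ℝ | ∃ u ∈ (K : Set E), ‖u‖ = 1 ∧ r = ‖T u‖}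
      = (fun x : K => ‖(T ∘L K.subtypeL) x‖) '' Metric.sphere 0 1 := by
    ext r
    simp only [Set.mem_ofPred_eq, Set.mem_image, mem_sphere_zero_iff_norm, SetLike.mem_coe,
      Subtype.exists, ContinuousLinearMap.comp_apply, subtypeL_apply]
    exact ⟨fun ⟨u, hu, hu1, hr⟩ ↦ ⟨u, hu, hu1, hr.symm⟩, fun ⟨u, hu, hu1, hr⟩ ↦ ⟨u, hu, hu1, hr.symm⟩⟩
  rw [hset, ContinuousLinearMap.sSup_sphere_eq_norm, norm_comp_starProjection]

end Submodule

theorem gap_eq_opNorm_general (U V : Submodule ℝ E) :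
    sSup {r : ℝ | ∃ u ∈ (U : Set E), ‖u‖ = 1 ∧ r = Metric.infDist u (V : Set E)}
        = ‖(projCLM Vᗮ).comp (projCLM U)‖ ∧
      ‖(projCLM Vᗮ).comp (projCLM U)‖ = ‖projCLM U - (projCLM V).comp (projCLM U)‖ ∧
      ‖projCLM U - (projCLM V).comp (projCLM U)‖
        = ‖projCLM U - (projCLM U).comp (projCLM V)‖ := by
  simp only [projCLM_eq_starProjection, V.infDist_eq_norm_starProjection_orthogonal]
  refine ⟨U.sSup_norm_apply_unit_eq_norm_comp_starProjection _, ?_, ?_⟩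
  · rw [starProjection_orthogonal, ContinuousLinearMap.sub_comp, ContinuousLinearMap.id_comp]
  · exact norm_sub_mul_eq_norm_sub_mul_of_isSelfAdjoint
      (isSelfAdjoint_starProjection U) (isSelfAdjoint_starProjection V)

/-- For `U ≠ 0`, the gap `δ(U,V) = sup { dist(u,V) : u ∈ U, ‖u‖ = 1 }` satisfies
`δ(U,V) = ‖P_{V⊥} ∘ P_U‖ = ‖P_U - P_V ∘ P_U‖ = ‖P_U - P_U ∘ P_V‖`. -/
theorem gap_eq_opNorm (U V : Submodule ℝ E) (hU : U ≠ ⊥) :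
    sSup {r : ℝ | ∃ u ∈ (U : Set E), ‖u‖ = 1 ∧ r = Metric.infDist u (V : Set E)}
        = ‖(projCLM Vᗮ).comp (projCLM U)‖ ∧
      ‖(projCLM Vᗮ).comp (projCLM U)‖ = ‖projCLM U - (projCLM V).comp (projCLM U)‖ ∧
      ‖projCLM U - (projCLM V).comp (projCLM U)‖
        = ‖projCLM U - (projCLM U).comp (projCLM V)‖ :=
  gap_eq_opNorm_general U V
end
end

section
/- For subspaces U, V ⊆ E one has δ(U,V) < 1 if and only if dim U ≤ dim V and U ∩ V⊥ = 0. -/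
open Module Submodule

noncomputable section

variable {E : Type*} [NormedAddCommGroup E] [InnerProductSpace ℝ E] [FiniteDimensional ℝ E]

/-!
Since `P_U - P_V P_U = P_{V⊥} P_U`, a nonzero vector of `U ∩ V⊥` is fixed by this operator and
forces `δ(U,V) ≥ 1`. Conversely, if `U ∩ V⊥ = 0`, then `P_{V⊥}` strictly shortens every nonzero
vector of `U`, so `‖P_{V⊥} P_U x‖ < 1` on the unit sphere; in finite dimension the operator norm
is attained there, hence `δ(U,V) < 1`. The dimension bound comes for free from
`dim U + dim V⊥ = dim (U + V⊥) ≤ dim E` when `U ∩ V⊥ = 0`.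
-/

namespace ContinuousLinearMap

variable {F G : Type*} [NormedAddCommGroup F] [NormedSpace ℝ F] [FiniteDimensional ℝ F]
  [SeminormedAddCommGroup G] [NormedSpace ℝ G]

theorem exists_norm_eq_one_norm_apply_eq_opNorm [Nontrivial F] (f : F →L[ℝ] G) :
    ∃ x, ‖x‖ = 1 ∧ ‖f x‖ = ‖f‖ := by
  have hsphere : IsCompact (Metric.sphere (0 : F) 1) := isCompact_sphere 0 1
  have hne : (Metric.sphere (0 : F) 1).Nonempty := NormedSpace.sphere_nonempty.mpr zero_le_one
  obtain ⟨x, hx, hmax⟩ :=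
    (hsphere.image (continuous_norm.comp f.continuous)).sSup_mem (hne.image _)
  exact ⟨x, mem_sphere_zero_iff_norm.mp hx, hmax.trans f.sSup_sphere_eq_norm⟩

theorem opNorm_lt_of_norm_apply_lt (f : F →L[ℝ] G) {c : ℝ} (hc : 0 < c)
    (h : ∀ x, ‖x‖ = 1 → ‖f x‖ < c) : ‖f‖ < c := by
  cases subsingleton_or_nontrivial F with
  | inl _ => rwa [f.opNorm_subsingleton]
  | inr _ =>
    obtain ⟨x, hx, hfx⟩ := f.exists_norm_eq_one_norm_apply_eq_opNorm
    exact hfx ▸ h x hx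

end ContinuousLinearMap

theorem Submodule.norm_starProjection_lt_of_notMem {𝕜 F : Type*} [RCLike 𝕜]
    [NormedAddCommGroup F] [InnerProductSpace 𝕜 F] (K : Submodule 𝕜 F)
    [K.HasOrthogonalProjection] {x : F} (hx : x ∉ K) : ‖K.starProjection x‖ < ‖x‖ := by
  have hpythag := K.norm_sq_eq_add_norm_sq_starProjection x
  have hperp : Kᗮ.starProjection x ≠ 0 := by
    rwa [Ne, starProjection_apply_eq_zero_iff, orthogonal_orthogonal]
  have := norm_pos_iff.mpr hperp
  exact lt_of_pow_lt_pow_left₀ 2 (norm_nonneg x) (by nlinarith)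

theorem gap_eq_opNorm_s2 (U V : Submodule ℝ E) :
    gap U V = ‖Vᗮ.starProjection ∘L U.starProjection‖ := by
  rw [gap, starProjection_orthogonal, ContinuousLinearMap.sub_comp,
    ContinuousLinearMap.id_comp, projCLM_eq_starProjection, projCLM_eq_starProjection]

theorem inf_orthogonal_eq_bot_of_gap_lt_one {U V : Submodule ℝ E} (h : gap U V < 1) :
    U ⊓ Vᗮ = ⊥ := by
  refine (Submodule.eq_bot_iff _).mpr fun x ⟨hxU, hxV⟩ => norm_eq_zero.mp ?_
  have hfix : (Vᗮ.starProjection ∘L U.starProjection) x = x := by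
    simp [starProjection_eq_self_iff.mpr hxU, starProjection_eq_self_iff.mpr hxV]
  have hle := (Vᗮ.starProjection ∘L U.starProjection).le_opNorm x
  rw [hfix, ← gap_eq_opNorm_s2] at hle
  nlinarith [norm_nonneg x]

theorem gap_lt_one_of_inf_orthogonal_eq_bot {U V : Submodule ℝ E} (h : U ⊓ Vᗮ = ⊥) :
    gap U V < 1 := by
  rw [gap_eq_opNorm_s2]
  refine ContinuousLinearMap.opNorm_lt_of_norm_apply_lt _ one_pos fun x hx => ?_
  set y := U.starProjection x
  rcases eq_or_ne y 0 with hy | hy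
  · simp [y, hy]
  have hyV : y ∉ Vᗮ := fun hyV =>
    hy ((Submodule.eq_bot_iff _).mp h y ⟨U.starProjection_apply_mem x, hyV⟩)
  calc ‖Vᗮ.starProjection y‖ < ‖y‖ := Vᗮ.norm_starProjection_lt_of_notMem hyV
    _ ≤ ‖x‖ := U.norm_starProjection_apply_le x
    _ = 1 := hx

theorem finrank_le_finrank_of_inf_orthogonal_eq_bot {U V : Submodule ℝ E} (h : U ⊓ Vᗮ = ⊥) :
    finrank ℝ U ≤ finrank ℝ V := by
  have hsup := Submodule.finrank_sup_add_finrank_inf_eq U Vᗮ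
  have hcompl := V.finrank_add_finrank_orthogonal
  have hle := (U ⊔ Vᗮ).finrank_le
  rw [h, finrank_bot] at hsup
  omega

/-- `δ(U,V) < 1` if and only if `dim U ≤ dim V` and `U ∩ V⊥ = 0`. -/
theorem gap_lt_one_iff (U V : Submodule ℝ E) :
    gap U V < 1 ↔ finrank ℝ U ≤ finrank ℝ V ∧ U ⊓ Vᗮ = ⊥ := by
  constructor
  · intro h
    have hbot := inf_orthogonal_eq_bot_of_gap_lt_one h
    exact ⟨finrank_le_finrank_of_inf_orthogonal_eq_bot hbot, hbot⟩
  · exact fun ⟨_, hbot⟩ => gap_lt_one_of_inf_orthogonal_eq_bot hbot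
end
end

section
/- For any subspaces U, V ⊆ E one has ‖P_U − P_V‖ ≤ δ(U,V) + δ(V,U) ≤ 2‖P_U − P_V‖. -/
open Module Submodule

noncomputable section

variable {E : Type*} [NormedAddCommGroup E] [InnerProductSpace ℝ E] [FiniteDimensional ℝ E]

/-!
The argument takes place in any C⋆-ring. For self-adjoint `P, Q` one has
`P - Q = (P - QP) + (QP - Q)`, and `QP - Q` is the adjoint of `PQ - Q`, so both summands are gaps.
For a projection `Q`, `P - QP = (1 - Q)(P - Q)` and `1 - Q` is a projection, hence of norm at most `1`.
-/

theorem IsSelfAdjoint.norm_sub_le_norm_sub_mul_add_norm_sub_mul {A : Type*}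
    [NonUnitalNormedRing A] [StarRing A] [NormedStarGroup A] {p q : A}
    (hp : IsSelfAdjoint p) (hq : IsSelfAdjoint q) :
    ‖p - q‖ ≤ ‖p - q * p‖ + ‖q - p * q‖ := by
  have hadjoint : ‖q * p - q‖ = ‖q - p * q‖ := by
    rw [← norm_star, star_sub, star_mul, hp.star_eq, hq.star_eq, norm_sub_rev]
  calc ‖p - q‖ = ‖(p - q * p) + (q * p - q)‖ := by congr 1; abel
    _ ≤ ‖p - q * p‖ + ‖q * p - q‖ := norm_add_le _ _
    _ = ‖p - q * p‖ + ‖q - p * q‖ := by rw [hadjoint]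

theorem IsStarProjection.norm_sub_mul_le_norm_sub {A : Type*}
    [NormedRing A] [StarRing A] [CStarRing A] {q : A} (hq : IsStarProjection q) (p : A) :
    ‖p - q * p‖ ≤ ‖p - q‖ := by
  have hfactor : p - q * p = (1 - q) * (p - q) := by
    noncomm_ring [hq.isIdempotentElem.eq]
  calc ‖p - q * p‖ = ‖(1 - q) * (p - q)‖ := by rw [hfactor]
    _ ≤ ‖1 - q‖ * ‖p - q‖ := norm_mul_le _ _
    _ ≤ 1 * ‖p - q‖ := by gcongr; exact hq.one_sub.norm_le
    _ = ‖p - q‖ := one_mul _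

theorem isStarProjection_projCLM (U : Submodule ℝ E) : IsStarProjection (projCLM U) :=
  isStarProjection_starProjection

theorem gap_eq_norm_sub_mul (U V : Submodule ℝ E) :
    gap U V = ‖projCLM U - projCLM V * projCLM U‖ :=
  rfl

/-- `‖P_U − P_V‖ ≤ δ(U,V) + δ(V,U) ≤ 2 ‖P_U − P_V‖`. -/
theorem norm_sub_le_gap_add_gap (U V : Submodule ℝ E) :
    ‖projCLM U - projCLM V‖ ≤ gap U V + gap V U ∧
      gap U V + gap V U ≤ 2 * ‖projCLM U - projCLM V‖ := by
  have hU := isStarProjection_projCLM U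
  have hV := isStarProjection_projCLM V
  rw [gap_eq_norm_sub_mul, gap_eq_norm_sub_mul]
  refine ⟨hU.isSelfAdjoint.norm_sub_le_norm_sub_mul_add_norm_sub_mul hV.isSelfAdjoint, ?_⟩
  have hUV := hV.norm_sub_mul_le_norm_sub (projCLM U)
  have hVU := hU.norm_sub_mul_le_norm_sub (projCLM V)
  linarith [norm_sub_rev (projCLM V) (projCLM U)]
end
end

section
/- Let U, V be subspaces of E with dim U ≤ dim V and U ∩ V⊥ = 0. Then the shadow S := P_V(U) of U on V satisfies U⊥ ∩ S = 0; consequently there is a unique linear map M : U → U⊥ (the slope of the pair (U,V)) such that S = { u + M u : u ∈ U }. -/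
/-!
Write `P` for the orthogonal projection onto `V` and `S = P U`. If `P u ⊥ U` for some `u ∈ U`,
then `‖P u‖² = ⟪P u, u⟫ = 0`, so `Uᗮ ⊓ S = ⊥`. Since `U ⊓ Vᗮ = ⊥` is the kernel of `P` on `U`,
`dim S = dim U`, so `S` is a complement of `Uᗮ`. Any complement `W` of `Uᗮ` is the graph over `U`
of a unique map `U → Uᗮ`, namely minus the projection onto `Uᗮ` along `W`.
-/

open Module Submodule

noncomputable section

variable {E : Type*} [NormedAddCommGroup E] [InnerProductSpace ℝ E] [FiniteDimensional ℝ E]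

namespace Submodule

section Graph

variable {R M : Type*} [Ring R] [AddCommGroup M] [Module R M] {U U' W : Submodule R M}

theorem map_projection_eq_of_codisjoint (hU : Codisjoint U U') (hW : IsCompl W U') :
    U.map (W.projection U' hW) = W := by
  have hU' : U'.map (W.projection U' hW) = ⊥ := by
    rw [eq_bot_iff, map_le_iff_le_comap, comap_bot, ker_projection]
  rw [← sup_bot_eq (U.map _), ← hU', ← map_sup, hU.eq_top, map_top, range_projection]

theorem range_subtype_add_subtype_comp_injective (h : Disjoint U U') :
    Function.Injective fun A : U →ₗ[R] U' => LinearMap.range (U.subtype + U'.subtype ∘ₗ A) := by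
  intro A B hAB
  ext u
  obtain ⟨v, hv⟩ : (u : M) + A u ∈ LinearMap.range (U.subtype + U'.subtype ∘ₗ B) := by
    simp only at hAB
    exact hAB ▸ ⟨u, rfl⟩
  simp only [LinearMap.add_apply, LinearMap.comp_apply, subtype_apply] at hv
  have huv : (u : M) - v = B v - A u := by rw [sub_eq_sub_iff_add_eq_add, ← hv, add_comm]
  have : u = v := by
    refine Subtype.ext (sub_eq_zero.1 ?_)
    exact disjoint_def.1 h _ (U.sub_mem u.2 v.2) (huv ▸ U'.sub_mem (B v).2 (A u).2)
  subst this
  simpa using hv.symm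

theorem existsUnique_eq_range_subtype_add_subtype_comp (hU : IsCompl U U') (hW : IsCompl W U') :
    ∃! A : U →ₗ[R] U', W = LinearMap.range (U.subtype + U'.subtype ∘ₗ A) := by
  set A₀ : U →ₗ[R] U' := -(U'.projectionOnto W hW.symm ∘ₗ U.subtype)
  have hA₀ : U.subtype + U'.subtype ∘ₗ A₀ = W.projection U' hW ∘ₗ U.subtype := by
    ext u
    simp [A₀, projection_eq_self_sub_projection hW.symm, sub_eq_add_neg]
  have hrange : W = LinearMap.range (U.subtype + U'.subtype ∘ₗ A₀) := by
    rw [hA₀, LinearMap.range_comp, range_subtype, map_projection_eq_of_codisjoint hU.codisjoint]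
  exact ⟨A₀, hrange, fun B hB ↦
    range_subtype_add_subtype_comp_injective hU.disjoint (hB.symm.trans hrange)⟩

end Graph

section Shadow

variable {𝕜 F : Type*} [RCLike 𝕜] [NormedAddCommGroup F] [InnerProductSpace 𝕜 F]

theorem orthogonal_inf_map_starProjection_eq_bot (U V : Submodule 𝕜 F)
    [V.HasOrthogonalProjection] : Uᗮ ⊓ U.map (V.starProjection : F →ₗ[𝕜] F) = ⊥ := by
  rw [eq_bot_iff]
  rintro _ ⟨hPu, u, hu, rfl⟩
  rw [mem_bot, ← inner_self_eq_zero (𝕜 := 𝕜)]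
  calc inner 𝕜 (V.starProjection u) (V.starProjection u)
      = inner 𝕜 (V.starProjection (V.starProjection u)) u :=
        (inner_starProjection_left_eq_right V _ u).symm
    _ = inner 𝕜 (V.starProjection u) u := by
        rw [starProjection_eq_self_iff.2 (starProjection_apply_mem V u)]
    _ = 0 := inner_left_of_mem_orthogonal hu hPu

theorem isCompl_map_starProjection_orthogonal [FiniteDimensional 𝕜 F] {U V : Submodule 𝕜 F}
    (h : Disjoint U Vᗮ) : IsCompl (U.map (V.starProjection : F →ₗ[𝕜] F)) Uᗮ := by
  have hinj : Function.Injective ((V.starProjection : F →ₗ[𝕜] F).domRestrict U) := by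
    simpa using h
  have hrank : finrank 𝕜 (U.map (V.starProjection : F →ₗ[𝕜] F)) = finrank 𝕜 U := by
    rw [← LinearMap.range_domRestrict]
    exact LinearMap.finrank_range_of_inj hinj
  rw [isCompl_iff_disjoint _ _ (by rw [hrank, finrank_add_finrank_orthogonal]), disjoint_iff,
    inf_comm]
  exact orthogonal_inf_map_starProjection_eq_bot U V

end Shadow

end Submodule

theorem exists_unique_slope_general (U V : Submodule ℝ E) (htrans : U ⊓ Vᗮ = ⊥) :
    Uᗮ ⊓ Submodule.map (projCLM V : E →ₗ[ℝ] E) U = ⊥ ∧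
      ∃! M : ↥U →ₗ[ℝ] ↥Uᗮ,
        Submodule.map (projCLM V : E →ₗ[ℝ] E) U = LinearMap.range (U.subtype + Uᗮ.subtype ∘ₗ M) :=
  -- `projCLM V` is `V.starProjection` by definition
  ⟨orthogonal_inf_map_starProjection_eq_bot U V,
    existsUnique_eq_range_subtype_add_subtype_comp U.isCompl_orthogonal
      (isCompl_map_starProjection_orthogonal (disjoint_iff.2 htrans))⟩

/-- Let `U, V` be subspaces with `dim U ≤ dim V` and `U ∩ V⊥ = 0`.  Then the shadow
`S := P_V(U)` satisfies `U⊥ ∩ S = 0`, and there is a unique linear map `M : U → U⊥`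
(the slope of the pair `(U,V)`) whose graph `{u + M u : u ∈ U}` equals `S`. -/
theorem exists_unique_slope (U V : Submodule ℝ E)
    (hdim : finrank ℝ U ≤ finrank ℝ V) (htrans : U ⊓ Vᗮ = ⊥) :
    Uᗮ ⊓ Submodule.map (projCLM V : E →ₗ[ℝ] E) U = ⊥ ∧
      ∃! M : ↥U →ₗ[ℝ] ↥Uᗮ,
        Submodule.map (projCLM V : E →ₗ[ℝ] E) U = LinearMap.range (U.subtype + Uᗮ.subtype ∘ₗ M) :=
  exists_unique_slope_general U V htrans
end
end

section
/- There exists a constant C > 1, depending only on the dimension of E, such that for every subspace U ⊆ E and every linear map S : U → U⊥, with graph Γ_S := { u + S u : u ∈ U }, one has (1/C) ‖S‖ (1 + ‖S‖²)^{−1/2} ≤ δ(U, Γ_S) ≤ C ‖S‖ (1 + ‖S‖²)^{−1/2}. -/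
open Module Submodule

noncomputable section

variable {E : Type*} [NormedAddCommGroup E] [InnerProductSpace ℝ E] [FiniteDimensional ℝ E]

/-!
Write `K = ‖S‖` and let `x ∈ U`, with `y + S y` its nearest point on the graph `Γ_S`. By
Pythagoras `dist(x, Γ_S)² = ‖x - y‖² + ‖S y‖²`, while `‖S x‖ ≤ K ‖x - y‖ + ‖S y‖`, so
Cauchy–Schwarz in `ℝ²` gives `‖S x‖ ≤ √(1 + K²) · dist(x, Γ_S)`. Conversely, testing against
the graph point over `x / (1 + K²)` gives `dist(x, Γ_S) ≤ K / √(1 + K²) · ‖x‖`. Together these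
show `δ(U, Γ_S) = K / √(1 + K²)` exactly, so any `C > 1` works, independently of the dimension.
-/

section Graph

variable {F : Type*} [NormedAddCommGroup F] [InnerProductSpace ℝ F]

theorem norm_sub_starProjection_le {K : Submodule ℝ F} [K.HasOrthogonalProjection] (v : F)
    {w : F} (hw : w ∈ K) : ‖v - K.starProjection v‖ ≤ ‖v - w‖ := by
  rw [starProjection_minimal]
  exact ciInf_le ⟨0, by rintro _ ⟨z, rfl⟩; positivity⟩ (⟨w, hw⟩ : K)

variable {U : Submodule ℝ F}

/-- The graph `Γ_S = {u + S u | u ∈ U}`. -/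
def orthGraph (S : U →L[ℝ] Uᗮ) : Submodule ℝ F :=
  LinearMap.range ((U.subtypeL + Uᗮ.subtypeL.comp S : U →L[ℝ] F) : U →ₗ[ℝ] F)

variable (S : U →L[ℝ] Uᗮ)

theorem mem_orthGraph {v : F} : v ∈ orthGraph S ↔ ∃ y : U, (y : F) + S y = v := Iff.rfl

theorem norm_sub_graph_point_sq (x y : U) :
    ‖(x : F) - (y + S y)‖ ^ 2 = ‖(x : F) - y‖ ^ 2 + ‖S y‖ ^ 2 := by
  have hxy : (x : F) - y ∈ U := U.sub_mem x.2 y.2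
  rw [show (x : F) - (y + S y) = ((x : F) - y) - S y by abel, norm_sub_sq_real,
    inner_right_of_mem_orthogonal hxy (S y).2, coe_norm]
  ring

theorem norm_apply_le_sqrt_mul_norm_sub_starProjection [(orthGraph S).HasOrthogonalProjection]
    (x : U) :
    ‖S x‖ ≤ √(1 + ‖S‖ ^ 2) * ‖(x : F) - (orthGraph S).starProjection x‖ := by
  obtain ⟨y, hy⟩ := (mem_orthGraph S).1 ((orthGraph S).starProjection_apply_mem x)
  rw [← hy]
  set a := ‖(x : F) - y‖
  set b := ‖S y‖
  have hSx : ‖S x‖ ≤ ‖S‖ * a + b := calc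
    ‖S x‖ = ‖S (x - y) + S y‖ := by rw [← map_add, sub_add_cancel]
    _ ≤ ‖S‖ * ‖x - y‖ + b := (norm_add_le _ _).trans (by gcongr; exact S.le_opNorm _)
  have cauchy_schwarz : (‖S‖ * a + b) ^ 2 ≤ (1 + ‖S‖ ^ 2) * (a ^ 2 + b ^ 2) := by
    nlinarith [sq_nonneg (a - ‖S‖ * b)]
  rw [← Real.sqrt_sq (norm_nonneg ((x : F) - (y + S y))), ← Real.sqrt_mul (by positivity),
    norm_sub_graph_point_sq]
  exact hSx.trans (Real.le_sqrt_of_sq_le cauchy_schwarz)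

theorem norm_sub_starProjection_orthGraph_le [(orthGraph S).HasOrthogonalProjection] (x : U) :
    ‖(x : F) - (orthGraph S).starProjection x‖ ≤ ‖S‖ / √(1 + ‖S‖ ^ 2) * ‖x‖ := by
  -- this `c` minimises `(1 - c)² + c² ‖S‖²`, the bound below for the graph point over `c • x`
  obtain ⟨c, hc⟩ : ∃ c : ℝ, c = 1 / (1 + ‖S‖ ^ 2) := ⟨_, rfl⟩
  have hc₀ : 0 ≤ c := hc ▸ by positivity
  have hc₁ : c ≤ 1 := hc ▸ div_le_one_of_le₀ (by nlinarith) (by positivity)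
  have hcoef : (1 - c) ^ 2 + c ^ 2 * ‖S‖ ^ 2 = (‖S‖ / √(1 + ‖S‖ ^ 2)) ^ 2 := by
    rw [div_pow, Real.sq_sqrt (by positivity), hc]
    field_simp
    ring
  have hx : ‖(x : F) - (c • x : U)‖ = (1 - c) * ‖x‖ := by
    rw [coe_smul, show (x : F) - c • x = (1 - c) • (x : F) by module, norm_smul,
      Real.norm_of_nonneg (by linarith), coe_norm]
  have hSx : ‖S (c • x)‖ ≤ c * (‖S‖ * ‖x‖) := by
    rw [map_smul, norm_smul, Real.norm_of_nonneg hc₀]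
    gcongr
    exact S.le_opNorm x
  refine (norm_sub_starProjection_le (x : F) ((mem_orthGraph S).2 ⟨c • x, rfl⟩)).trans
    (le_of_sq_le_sq ?_ (by positivity))
  rw [norm_sub_graph_point_sq, hx, mul_pow, mul_pow, ← hcoef]
  nlinarith [pow_le_pow_left₀ (norm_nonneg _) hSx 2]

end Graph

theorem norm_sub_starProjection_le_gap (U V : Submodule ℝ E) {u : E} (hu : u ∈ U) :
    ‖u - V.starProjection u‖ ≤ gap U V * ‖u‖ := by
  have happly : (projCLM U - (projCLM V).comp (projCLM U)) u = u - V.starProjection u := by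
    simp [projCLM_eq_starProjection, starProjection_eq_self_iff.2 hu]
  exact happly ▸ ContinuousLinearMap.le_opNorm _ _

theorem gap_le_of_forall_norm_sub_starProjection_le (U V : Submodule ℝ E) {C : ℝ} (hC : 0 ≤ C)
    (h : ∀ u ∈ U, ‖u - V.starProjection u‖ ≤ C * ‖u‖) : gap U V ≤ C :=
  ContinuousLinearMap.opNorm_le_bound _ hC fun v => by
    simpa [projCLM_eq_starProjection] using (h _ (U.starProjection_apply_mem v)).trans
      (by gcongr; exact U.norm_starProjection_apply_le v)

theorem gap_orthGraph {U : Submodule ℝ E} (S : U →L[ℝ] Uᗮ) :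
    gap U (orthGraph S) = ‖S‖ / √(1 + ‖S‖ ^ 2) := by
  have hsqrt : 0 < √(1 + ‖S‖ ^ 2) := by positivity
  refine le_antisymm (gap_le_of_forall_norm_sub_starProjection_le _ _ (by positivity)
    fun u hu => norm_sub_starProjection_orthGraph_le S ⟨u, hu⟩) ?_
  rw [div_le_iff₀ hsqrt]
  refine S.opNorm_le_bound (mul_nonneg (norm_nonneg _) hsqrt.le) fun x => ?_
  calc ‖S x‖ ≤ √(1 + ‖S‖ ^ 2) * ‖(x : E) - (orthGraph S).starProjection x‖ :=
        norm_apply_le_sqrt_mul_norm_sub_starProjection S x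
    _ ≤ √(1 + ‖S‖ ^ 2) * (gap U (orthGraph S) * ‖x‖) := by
        gcongr; exact norm_sub_starProjection_le_gap _ _ x.2
    _ = gap U (orthGraph S) * √(1 + ‖S‖ ^ 2) * ‖x‖ := by ring

/-- There exists a constant `C > 1`, depending only on `dim E`, such that for every
subspace `U ⊆ E` and every linear map `S : U → U⊥` with graph `Γ_S = {u + Su : u ∈ U}`,
`(1/C) ‖S‖ (1+‖S‖²)^{-1/2} ≤ δ(U, Γ_S) ≤ C ‖S‖ (1+‖S‖²)^{-1/2}`. -/
theorem gap_to_graph_bounds (n : ℕ) :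
    ∃ C : ℝ, 1 < C ∧
      ∀ (E : Type*) [NormedAddCommGroup E] [InnerProductSpace ℝ E] [FiniteDimensional ℝ E],
        finrank ℝ E = n →
        ∀ (U : Submodule ℝ E) (S : ↥U →L[ℝ] ↥Uᗮ),
          (1 / C) * (‖S‖ / Real.sqrt (1 + ‖S‖ ^ 2))
              ≤ gap U (LinearMap.range ((U.subtypeL + Uᗮ.subtypeL.comp S : ↥U →L[ℝ] E) : ↥U →ₗ[ℝ] E)) ∧
            gap U (LinearMap.range ((U.subtypeL + Uᗮ.subtypeL.comp S : ↥U →L[ℝ] E) : ↥U →ₗ[ℝ] E))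
              ≤ C * (‖S‖ / Real.sqrt (1 + ‖S‖ ^ 2)) := by
  refine ⟨2, one_lt_two, fun E _ _ _ _ U S => ?_⟩
  rw [show LinearMap.range _ = orthGraph S from rfl, gap_orthGraph]
  have hbound : 0 ≤ ‖S‖ / √(1 + ‖S‖ ^ 2) := by positivity
  constructor <;> linarith
end
end

section
/- Let 1 ≤ j ≤ k ≤ dim E. There exists a constant C > 1, depending only on j, k and dim E (in particular independent of U), such that for every j-dimensional subspace U ⊆ E and every k-dimensional subspace L ⊆ E one has (1/C)·d(L, Gr_k(E)_U)² ≤ |P_U − P_U P_L|² ≤ C·d(L, Gr_k(E)_U)², where d(L, Gr_k(E)_U) := inf{ |P_L − P_{L'}| : L' ∈ Gr_k(E), U ⊆ L' }. -/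
open Module Submodule

noncomputable section

variable {E : Type*} [NormedAddCommGroup E] [InnerProductSpace ℝ E] [FiniteDimensional ℝ E]

/-- The orthogonal projection onto `U` as a linear endomorphism of `E`. -/
noncomputable def projL (U : Submodule ℝ E) : E →ₗ[ℝ] E :=
  (projCLM U).toLinearMap

/-- The Frobenius norm `|A| = √tr(A A*)` of a linear endomorphism. -/
noncomputable def frobNorm (A : E →ₗ[ℝ] E) : ℝ :=
  Real.sqrt (LinearMap.trace ℝ E (A ∘ₗ LinearMap.adjoint A))

/-!
Take `C = 2`. For any `L' ⊇ U` we have `P_U - P_U P_L = P_U (P_{L'} - P_L)`, and composing with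
the contraction `P_U` does not increase the Frobenius norm, so `|P_U - P_U P_L| ≤ d(L, Gr_k(E)_U)`.
Conversely, `L ∩ Uᗮ` has dimension at least `k - j`; for a `(k - j)`-dimensional `M` inside it,
`L₀ = U ⊕ M` lies in `Gr_k(E)_U`. As `P_{L₀} = P_U + P_M` and `P_L P_M = P_M`, the trace formulas
`|P_V - P_W|² = dim V + dim W - 2 tr(P_V P_W)` and `|P_U - P_U P_L|² = dim U - tr(P_U P_L)` give
`|P_L - P_{L₀}|² = 2 |P_U - P_U P_L|²`.
-/

open LinearMap (adjoint trace)

@[simp]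
lemma projL_apply (V : Submodule ℝ E) (x : E) : projL V x = V.starProjection x := rfl

lemma projL_isSymmetricProjection (V : Submodule ℝ E) : (projL V).IsSymmetricProjection :=
  V.isSymmetricProjection_starProjection

lemma adjoint_projL (V : Submodule ℝ E) : adjoint (projL V) = projL V :=
  (LinearMap.isSymmetric_iff_isSelfAdjoint _).mp (projL_isSymmetricProjection V).isSymmetric

lemma projL_mul_self (V : Submodule ℝ E) : projL V * projL V = projL V :=
  (projL_isSymmetricProjection V).isIdempotentElem.eq

lemma projL_mul_projL_of_le {V W : Submodule ℝ E} (h : V ≤ W) :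
    projL V * projL W = projL V :=
  congrArg ContinuousLinearMap.toLinearMap (starProjection_comp_starProjection_of_le h)

lemma projL_mul_projL_of_ge {V W : Submodule ℝ E} (h : V ≤ W) :
    projL W * projL V = projL V := by
  simpa only [Module.End.mul_eq_comp, LinearMap.adjoint_comp, adjoint_projL] using
    congrArg adjoint (projL_mul_projL_of_le h)

lemma norm_projL_apply_le (V : Submodule ℝ E) (x : E) : ‖projL V x‖ ≤ ‖x‖ :=
  V.norm_starProjection_apply_le x

lemma trace_projL (V : Submodule ℝ E) : trace ℝ E (projL V) = finrank ℝ V :=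
  LinearMap.IsProj.trace ⟨fun x => V.starProjection_apply_mem x,
    fun _ hx => V.starProjection_eq_self_iff.mpr hx⟩

lemma projL_sup_of_isOrtho {U M : Submodule ℝ E} (h : U ⟂ M) :
    projL (U ⊔ M) = projL U + projL M := by
  ext x
  refine (U ⊔ M).eq_starProjection_of_mem_orthogonal
    (add_mem (mem_sup_left (U.starProjection_apply_mem x))
      (mem_sup_right (M.starProjection_apply_mem x))) ?_
  rw [← inf_orthogonal]
  refine ⟨?_, ?_⟩
  · simpa [sub_sub] using sub_mem (U.sub_starProjection_mem_orthogonal x)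
      (h.ge (M.starProjection_apply_mem x))
  · simpa [sub_sub, add_comm] using sub_mem (M.sub_starProjection_mem_orthogonal x)
      (h.le (U.starProjection_apply_mem x))

lemma frobNorm_nonneg (f : E →ₗ[ℝ] E) : 0 ≤ frobNorm f := Real.sqrt_nonneg _

lemma frobNorm_sq (f : E →ₗ[ℝ] E) : frobNorm f ^ 2 = trace ℝ E (f * adjoint f) :=
  Real.sq_sqrt f.isPositive_self_comp_adjoint.trace_nonneg

lemma frobNorm_sq_eq_sum {ι : Type*} [Fintype ι] (b : OrthonormalBasis ι ℝ E) (f : E →ₗ[ℝ] E) :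
    frobNorm f ^ 2 = ∑ i, ‖f (b i)‖ ^ 2 := by
  rw [frobNorm_sq, LinearMap.trace_mul_comm, LinearMap.trace_eq_sum_inner _ b]
  simp only [Module.End.mul_apply, LinearMap.adjoint_inner_right, real_inner_self_eq_norm_sq]

lemma frobNorm_comp_le {g : E →ₗ[ℝ] E} (hg : ∀ x, ‖g x‖ ≤ ‖x‖) (f : E →ₗ[ℝ] E) :
    frobNorm (g ∘ₗ f) ≤ frobNorm f := by
  refine pow_le_pow_iff_left₀ (frobNorm_nonneg _) (frobNorm_nonneg _) two_ne_zero |>.mp ?_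
  simp only [frobNorm_sq_eq_sum (stdOrthonormalBasis ℝ E), LinearMap.comp_apply]
  gcongr with i
  exact hg _

lemma frobNorm_neg (f : E →ₗ[ℝ] E) : frobNorm (-f) = frobNorm f := by
  simp only [frobNorm, map_neg, LinearMap.neg_comp, LinearMap.comp_neg, neg_neg]

lemma Submodule.exists_le_finrank_eq {K V : Type*} [DivisionRing K] [AddCommGroup V] [Module K V]
    {W : Submodule K V} {m : ℕ} (hm : m ≤ finrank K W) :
    ∃ M ≤ W, finrank K M = m := by
  obtain ⟨f, hf⟩ := exists_linearIndependent_of_le_finrank hm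
  refine ⟨span K (Set.range (W.subtype ∘ f)),
    span_le.mpr (Set.range_subset_iff.mpr fun i => (f i).2), ?_⟩
  rw [finrank_span_eq_card (hf.map' W.subtype W.ker_subtype), Fintype.card_fin]

lemma frobNorm_sq_projL_sub_projL (V W : Submodule ℝ E) :
    frobNorm (projL V - projL W) ^ 2
      = finrank ℝ V + finrank ℝ W - 2 * trace ℝ E (projL V * projL W) := by
  have hsq : (projL V - projL W) * (projL V - projL W)
      = projL V * projL V + projL W * projL W - projL V * projL W - projL W * projL V := by
    noncomm_ring
  rw [frobNorm_sq, map_sub, adjoint_projL, adjoint_projL, hsq, projL_mul_self, projL_mul_self,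
    map_sub, map_sub, map_add, trace_projL, trace_projL, LinearMap.trace_mul_comm _ (projL W)]
  ring

lemma frobNorm_sq_projL_sub_projL_comp (U L : Submodule ℝ E) :
    frobNorm (projL U - projL U ∘ₗ projL L) ^ 2
      = finrank ℝ U - trace ℝ E (projL U * projL L) := by
  set P := projL U
  set Q := projL L
  have hsq : (P - P * Q) * (P - Q * P) = P * P - P * Q * P - P * Q * P + P * (Q * Q) * P := by
    noncomm_ring
  have hcycle : trace ℝ E (P * Q * P) = trace ℝ E (P * Q) := by
    rw [LinearMap.trace_mul_comm, ← mul_assoc, projL_mul_self]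
  rw [frobNorm_sq, map_sub, LinearMap.adjoint_comp, adjoint_projL, adjoint_projL,
    ← Module.End.mul_eq_comp, ← Module.End.mul_eq_comp, hsq, projL_mul_self, projL_mul_self,
    map_add, map_sub, map_sub, hcycle, trace_projL]
  ring

lemma frobNorm_projL_sub_projL_comp_le {U L L' : Submodule ℝ E} (hU : U ≤ L') :
    frobNorm (projL U - projL U ∘ₗ projL L) ≤ frobNorm (projL L - projL L') :=
  calc frobNorm (projL U - projL U ∘ₗ projL L)
      = frobNorm (projL U ∘ₗ (-(projL L - projL L'))) := by
        rw [LinearMap.comp_neg, LinearMap.comp_sub, ← Module.End.mul_eq_comp (projL U) (projL L'),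
          projL_mul_projL_of_le hU, neg_sub]
    _ ≤ frobNorm (-(projL L - projL L')) := frobNorm_comp_le (norm_projL_apply_le U) _
    _ = frobNorm (projL L - projL L') := frobNorm_neg _

lemma exists_le_frobNorm_sq_projL_sub_projL_eq {U L : Submodule ℝ E}
    (hUL : finrank ℝ U ≤ finrank ℝ L) :
    ∃ L₀ : Submodule ℝ E, finrank ℝ L₀ = finrank ℝ L ∧ U ≤ L₀ ∧
      frobNorm (projL L - projL L₀) ^ 2 = 2 * frobNorm (projL U - projL U ∘ₗ projL L) ^ 2 := by
  have hdim : finrank ℝ L - finrank ℝ U ≤ finrank ℝ ↥(L ⊓ Uᗮ) := by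
    have := finrank_sup_add_finrank_inf_eq L Uᗮ
    have := finrank_add_finrank_orthogonal U
    have := (L ⊔ Uᗮ).finrank_le
    omega
  obtain ⟨M, hM, hMdim⟩ := exists_le_finrank_eq hdim
  have hUM : U ⟂ M := (isOrtho_iff_le.mpr (hM.trans inf_le_right)).symm
  have hUMdim : finrank ℝ ↥(U ⊔ M) = finrank ℝ L := by
    have := finrank_sup_add_finrank_inf_eq U M
    rw [hUM.disjoint.eq_bot, finrank_bot] at this
    omega
  refine ⟨U ⊔ M, hUMdim, le_sup_left, ?_⟩
  rw [frobNorm_sq_projL_sub_projL, frobNorm_sq_projL_sub_projL_comp, hUMdim,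
    projL_sup_of_isOrtho hUM, mul_add, projL_mul_projL_of_ge (hM.trans inf_le_left), map_add,
    trace_projL, hMdim, Nat.cast_sub hUL, LinearMap.trace_mul_comm ℝ (projL L)]
  ring

theorem frob_dist_comparable_general (n j k : ℕ) (hjk : j ≤ k) :
    ∃ C : ℝ, 1 < C ∧
      ∀ (E : Type*) [NormedAddCommGroup E] [InnerProductSpace ℝ E] [FiniteDimensional ℝ E],
        finrank ℝ E = n →
        ∀ (U L : Submodule ℝ E), finrank ℝ U = j → finrank ℝ L = k →
          (1 / C) * (sInf {r : ℝ | ∃ L' : Submodule ℝ E,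
                finrank ℝ L' = k ∧ U ≤ L' ∧ r = frobNorm (projL L - projL L')}) ^ 2
              ≤ (frobNorm (projL U - projL U ∘ₗ projL L)) ^ 2 ∧
            (frobNorm (projL U - projL U ∘ₗ projL L)) ^ 2
              ≤ C * (sInf {r : ℝ | ∃ L' : Submodule ℝ E,
                finrank ℝ L' = k ∧ U ≤ L' ∧ r = frobNorm (projL L - projL L')}) ^ 2 := by
  refine ⟨2, one_lt_two, fun E _ _ _ _ U L hU hL => ?_⟩
  set S := {r : ℝ | ∃ L' : Submodule ℝ E,
    finrank ℝ L' = k ∧ U ≤ L' ∧ r = frobNorm (projL L - projL L')}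
  obtain ⟨L₀, hL₀, hUL₀, hL₀_sq⟩ :=
    exists_le_frobNorm_sq_projL_sub_projL_eq (hU.trans_le (hjk.trans hL.ge))
  have hL₀S : frobNorm (projL L - projL L₀) ∈ S := ⟨L₀, hL₀.trans hL, hUL₀, rfl⟩
  have hA_le : frobNorm (projL U - projL U ∘ₗ projL L) ≤ sInf S :=
    le_csInf ⟨_, hL₀S⟩ fun _ ⟨_, _, hUL', hr⟩ => hr ▸ frobNorm_projL_sub_projL_comp_le hUL'
  have hle_L₀ : sInf S ≤ frobNorm (projL L - projL L₀) :=
    csInf_le ⟨0, fun _ ⟨_, _, _, hr⟩ => hr ▸ frobNorm_nonneg _⟩ hL₀S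
  have hA_nonneg := frobNorm_nonneg (projL U - projL U ∘ₗ projL L)
  constructor <;> nlinarith

/-- Let `1 ≤ j ≤ k ≤ dim E`.  There is a constant `C > 1`, depending only on `j`, `k` and
`dim E` (in particular independent of `U`), such that for every `j`-dimensional subspace
`U` and every `k`-dimensional subspace `L`,
`(1/C)·d(L, Gr_k(E)_U)² ≤ |P_U − P_U P_L|² ≤ C·d(L, Gr_k(E)_U)²`, where
`d(L, Gr_k(E)_U) = inf { |P_L − P_{L'}| : dim L' = k, U ⊆ L' }`. -/
theorem frob_dist_comparable (n j k : ℕ) (hj : 1 ≤ j) (hjk : j ≤ k) (hk : k ≤ n) :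
    ∃ C : ℝ, 1 < C ∧
      ∀ (E : Type*) [NormedAddCommGroup E] [InnerProductSpace ℝ E] [FiniteDimensional ℝ E],
        finrank ℝ E = n →
        ∀ (U L : Submodule ℝ E), finrank ℝ U = j → finrank ℝ L = k →
          (1 / C) * (sInf {r : ℝ | ∃ L' : Submodule ℝ E,
                finrank ℝ L' = k ∧ U ≤ L' ∧ r = frobNorm (projL L - projL L')}) ^ 2
              ≤ (frobNorm (projL U - projL U ∘ₗ projL L)) ^ 2 ∧
            (frobNorm (projL U - projL U ∘ₗ projL L)) ^ 2
              ≤ C * (sInf {r : ℝ | ∃ L' : Submodule ℝ E,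
                finrank ℝ L' = k ∧ U ≤ L' ∧ r = frobNorm (projL L - projL L')}) ^ 2 :=
  frob_dist_comparable_general n j k hjk
end
end

section
/- Let A be a symmetric linear endomorphism of E having at least one positive and at least one negative eigenvalue and no zero eigenvalue. Let U be the sum of the eigenspaces of A corresponding to positive eigenvalues, let m₊(A) be the smallest positive eigenvalue of A, and let m₋(A) be the smallest positive eigenvalue of −A. Let V ⊆ E be a subspace with dim U ≤ dim V and U ∩ V⊥ = 0, and let M : U → U⊥ be the slope of the pair (U,V), i.e., the unique linear map with P_V(U) = { u + M u : u ∈ U }. Then for every t ≥ 0 one has δ(U, exp(tA)·V) ≤ e^{−(m₊(A) + m₋(A)) t} ‖M‖. -/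
open Module Submodule

noncomputable section

variable {E : Type*} [NormedAddCommGroup E] [InnerProductSpace ℝ E] [FiniteDimensional ℝ E]

/-- The exponential of a continuous linear endomorphism. -/
noncomputable def expEnd {V : Type*} [NormedAddCommGroup V] [NormedSpace ℝ V]
    (B : V →L[ℝ] V) : V →L[ℝ] V :=
  NormedSpace.exp B

/-- The sum of the eigenspaces of `A` corresponding to positive eigenvalues. -/
noncomputable def posSpace (A : E →L[ℝ] E) : Submodule ℝ E :=
  ⨆ μ ∈ Set.Ioi (0 : ℝ), Module.End.eigenspace (A : E →ₗ[ℝ] E) μ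

/-!
For `y ∈ U` put `u = exp(-tA) y ∈ U`. The slope gives `u + M u ∈ V`, hence
`exp(tA) (u + M u) = y + exp(tA) (M u)` lies in `exp(tA)·V`. In an eigenbasis of `A`,
`exp(-tA)` shrinks `U` by at least `e^{-m₊ t}`, and `exp(tA)` shrinks `U⊥`, which is the sum of
the eigenspaces for negative eigenvalues, by at least `e^{-m₋ t}`; so `y` lies within
`e^{-(m₊+m₋)t} ‖M‖ ‖y‖` of `exp(tA)·V`.
-/

open scoped RealInnerProductSpace
open Module.End

theorem gap_le_of_forall_exists_norm_sub_le {U W : Submodule ℝ E} {C : ℝ} (hC : 0 ≤ C)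
    (h : ∀ y ∈ U, ∃ w ∈ W, ‖y - w‖ ≤ C * ‖y‖) : gap U W ≤ C := by
  refine ContinuousLinearMap.opNorm_le_bound _ hC fun x => ?_
  set y := projCLM U x
  obtain ⟨w, hwW, hw⟩ := h y (Submodule.coe_mem _)
  calc ‖y - projCLM W y‖ = ⨅ z : W, ‖y - z‖ := W.starProjection_minimal y
    _ ≤ ‖y - w‖ := ciInf_le ⟨0, Set.forall_mem_range.2 fun _ => norm_nonneg _⟩ (⟨w, hwW⟩ : W)
    _ ≤ C * ‖y‖ := hw
    _ ≤ C * ‖x‖ := by gcongr; exact U.norm_orthogonalProjectionOnto_apply_le x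

theorem map_projCLM_le (U V : Submodule ℝ E) : map (projCLM V : E →ₗ[ℝ] E) U ≤ V := by
  rintro _ ⟨x, -, rfl⟩
  exact coe_mem _

theorem expEnd_apply_expEnd_neg {F : Type*} [NormedAddCommGroup F] [NormedSpace ℝ F]
    [CompleteSpace F] (B : F →L[ℝ] F) (y : F) : expEnd B (expEnd (-B) y) = y := by
  have hball (X : F →L[ℝ] F) : X ∈ Metric.eball 0 (NormedSpace.expSeries ℝ (F →L[ℝ] F)).radius := by
    rw [NormedSpace.expSeries_radius_eq_top]
    exact edist_lt_top X 0
  rw [expEnd, expEnd, ← mul_apply_eq_comp, ← NormedSpace.exp_add_of_commute_of_mem_ball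
    (Commute.neg_right (Commute.refl B)) (hball _) (hball _), add_neg_cancel,
    NormedSpace.exp_zero, one_apply_eq_self]

theorem expEnd_apply_of_apply_eq_smul {F : Type*} [NormedAddCommGroup F] [NormedSpace ℝ F]
    [CompleteSpace F] {B : F →L[ℝ] F} {μ : ℝ} {v : F} (hv : B v = μ • v) :
    expEnd B v = Real.exp μ • v := by
  have hpow : ∀ n : ℕ, (B ^ n) v = μ ^ n • v := by
    intro n
    induction n with
    | zero => simp
    | succ n ih => rw [pow_succ', mul_apply_eq_comp, ih, map_smul, hv, smul_smul, ← pow_succ]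
  have hB := (NormedSpace.exp_series_hasSum_exp' (𝕂 := ℝ) B).mapL (ContinuousLinearMap.apply ℝ F v)
  have hμ := (NormedSpace.exp_series_hasSum_exp' (𝕂 := ℝ) μ).smul_const v
  simp only [ContinuousLinearMap.apply_apply, smul_apply, hpow, smul_smul] at hB
  rw [Real.exp_eq_exp_ℝ, expEnd]
  exact hB.unique hμ

theorem OrthonormalBasis.norm_le_of_abs_inner_le {F ι : Type*} [NormedAddCommGroup F]
    [InnerProductSpace ℝ F] [Fintype ι] (b : OrthonormalBasis ι ℝ F) {x y : F} {r : ℝ}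
    (hr : 0 ≤ r) (h : ∀ i, |⟪b i, y⟫| ≤ r * |⟪b i, x⟫|) : ‖y‖ ≤ r * ‖x‖ := by
  refine le_of_pow_le_pow_left₀ two_ne_zero (by positivity) ?_
  rw [mul_pow, ← b.sum_sq_inner_right, ← b.sum_sq_inner_right, Finset.mul_sum]
  gcongr with i
  rw [← sq_abs, ← sq_abs ⟪b i, x⟫, ← mul_pow]
  exact pow_le_pow_left₀ (abs_nonneg _) (h i) 2

namespace LinearMap.IsSymmetric

variable {T : E →ₗ[ℝ] E}

theorem mem_iSup_eigenspace_iff (hT : T.IsSymmetric) (S : Set ℝ) (x : E) :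
    x ∈ ⨆ μ ∈ S, eigenspace T μ ↔
      ∀ i, hT.eigenvalues rfl i ∉ S → ⟪hT.eigenvectorBasis rfl i, x⟫ = 0 := by
  set b := hT.eigenvectorBasis rfl
  have hb : ∀ i, b i ∈ eigenspace T (hT.eigenvalues rfl i) :=
    fun i => (hT.hasEigenvector_eigenvectorBasis rfl i).1
  constructor
  · intro hx i hi
    suffices ⨆ μ ∈ S, eigenspace T μ ≤ (ℝ ∙ b i)ᗮ from
      mem_orthogonal_singleton_iff_inner_right.1 (this hx)
    refine iSup₂_le fun μ hμ v hv => mem_orthogonal_singleton_iff_inner_right.2 ?_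
    exact hT.orthogonalFamily_eigenspaces (ne_of_mem_of_not_mem hμ hi).symm ⟨b i, hb i⟩ ⟨v, hv⟩
  · intro h
    rw [← b.sum_repr' x]
    refine sum_mem fun i _ => ?_
    by_cases hi : hT.eigenvalues rfl i ∈ S
    · exact smul_mem _ _ (mem_iSup_of_mem _ (mem_iSup_of_mem hi (hb i)))
    · rw [h i hi, zero_smul]
      exact zero_mem _

theorem orthogonal_iSup_eigenspace_le (hT : T.IsSymmetric) (S : Set ℝ) :
    (⨆ μ ∈ S, eigenspace T μ)ᗮ ≤ ⨆ μ ∈ Sᶜ, eigenspace T μ := by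
  intro x hx
  refine (hT.mem_iSup_eigenspace_iff Sᶜ x).2 fun i hi => inner_right_of_mem_orthogonal ?_ hx
  exact mem_iSup_of_mem (hT.eigenvalues rfl i)
    (mem_iSup_of_mem (not_not.1 hi) (hT.hasEigenvector_eigenvectorBasis rfl i).1)

end LinearMap.IsSymmetric

namespace IsSelfAdjoint

variable {A : E →L[ℝ] E}

theorem inner_eigenvectorBasis_expEnd_smul (hA : IsSelfAdjoint A) (s : ℝ) (x : E)
    (i : Fin (finrank ℝ E)) :
    ⟪hA.isSymmetric.eigenvectorBasis rfl i, expEnd (s • A) x⟫ =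
      Real.exp (s * hA.isSymmetric.eigenvalues rfl i) *
        ⟪hA.isSymmetric.eigenvectorBasis rfl i, x⟫ := by
  have hexp : IsSelfAdjoint (expEnd (s • A)) := ((IsSelfAdjoint.all s).smul hA).exp
  refine (hexp.isSymmetric _ _).symm.trans ?_
  rw [ContinuousLinearMap.coe_coe, expEnd_apply_of_apply_eq_smul, real_inner_smul_left]
  rw [smul_apply, ← ContinuousLinearMap.coe_coe A, hA.isSymmetric.apply_eigenvectorBasis,
    smul_smul, RCLike.ofReal_real_eq_id, id]

theorem expEnd_smul_mem_iSup_eigenspace (hA : IsSelfAdjoint A) {S : Set ℝ} (s : ℝ) {x : E}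
    (hx : x ∈ ⨆ μ ∈ S, eigenspace (A : E →ₗ[ℝ] E) μ) :
    expEnd (s • A) x ∈ ⨆ μ ∈ S, eigenspace (A : E →ₗ[ℝ] E) μ := by
  rw [hA.isSymmetric.mem_iSup_eigenspace_iff] at hx ⊢
  intro i hi
  rw [hA.inner_eigenvectorBasis_expEnd_smul, hx i hi, mul_zero]

theorem norm_expEnd_smul_le_of_mem_iSup_eigenspace (hA : IsSelfAdjoint A) {S : Set ℝ} {s c : ℝ}
    (hS : ∀ μ ∈ S, HasEigenvalue (A : E →ₗ[ℝ] E) μ → s * μ ≤ c) {x : E}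
    (hx : x ∈ ⨆ μ ∈ S, eigenspace (A : E →ₗ[ℝ] E) μ) :
    ‖expEnd (s • A) x‖ ≤ Real.exp c * ‖x‖ := by
  refine (hA.isSymmetric.eigenvectorBasis rfl).norm_le_of_abs_inner_le (Real.exp_pos c).le
    fun i => ?_
  rw [hA.inner_eigenvectorBasis_expEnd_smul, abs_mul, abs_of_pos (Real.exp_pos _)]
  by_cases hi : hA.isSymmetric.eigenvalues rfl i ∈ S
  · gcongr
    exact hS _ hi (hA.isSymmetric.hasEigenvalue_eigenvalues rfl i)
  · rw [(hA.isSymmetric.mem_iSup_eigenspace_iff S x).1 hx i hi, abs_zero, mul_zero, mul_zero]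

end IsSelfAdjoint

theorem gap_exp_flow_decay_general (A : E →L[ℝ] E) (hA : IsSelfAdjoint A)
    (hzero : ¬ Module.End.HasEigenvalue (A : E →ₗ[ℝ] E) 0)
    (mp mm : ℝ)
    (hmp : IsLeast {μ : ℝ | 0 < μ ∧ Module.End.HasEigenvalue (A : E →ₗ[ℝ] E) μ} mp)
    (hmm : IsLeast {μ : ℝ | 0 < μ ∧ Module.End.HasEigenvalue (-(A : E →ₗ[ℝ] E)) μ} mm)
    (V : Submodule ℝ E)
    (M : ↥(posSpace A) →L[ℝ] ↥(posSpace A)ᗮ)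
    (hM : Submodule.map (projCLM V : E →ₗ[ℝ] E) (posSpace A)
        = LinearMap.range (((posSpace A).subtypeL + (posSpace A)ᗮ.subtypeL.comp M : ↥(posSpace A) →L[ℝ] E) :
          ↥(posSpace A) →ₗ[ℝ] E))
    (t : ℝ) (ht : 0 ≤ t) :
    gap (posSpace A) (Submodule.map (expEnd (t • A) : E →ₗ[ℝ] E) V)
      ≤ Real.exp (-(mp + mm) * t) * ‖M‖ := by
  have hdecay_pos : ∀ μ ∈ Set.Ioi 0, HasEigenvalue (A : E →ₗ[ℝ] E) μ → -t * μ ≤ -t * mp :=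
    fun μ hμ hμA => mul_le_mul_of_nonpos_left (hmp.2 ⟨hμ, hμA⟩) (neg_nonpos.2 ht)
  have hdecay_neg : ∀ μ ∈ (Set.Ioi 0)ᶜ, HasEigenvalue (A : E →ₗ[ℝ] E) μ → t * μ ≤ -(t * mm) := by
    intro μ hμ hμA
    have hμ0 : μ < 0 := lt_of_le_of_ne (not_lt.1 hμ) fun h => hzero (h ▸ hμA)
    have := hmm.2 ⟨neg_pos.2 hμ0, hasEigenvalue_neg_iff.2 (by rwa [neg_neg])⟩
    nlinarith
  refine gap_le_of_forall_exists_norm_sub_le (by positivity) fun y hy => ?_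
  have hyu : expEnd (t • A) (expEnd ((-t) • A) y) = y := by
    rw [neg_smul, expEnd_apply_expEnd_neg]
  set u := expEnd ((-t) • A) y
  have hu : u ∈ posSpace A := hA.expEnd_smul_mem_iSup_eigenspace (-t) hy
  set z : E := ↑(M ⟨u, hu⟩)
  have hz : z ∈ ⨆ μ ∈ (Set.Ioi 0)ᶜ, eigenspace (A : E →ₗ[ℝ] E) μ :=
    hA.isSymmetric.orthogonal_iSup_eigenspace_le _ (M ⟨u, hu⟩).2
  have huz : u + z ∈ V := map_projCLM_le _ V (hM.ge ⟨⟨u, hu⟩, rfl⟩)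
  refine ⟨expEnd (t • A) (u + z), mem_map_of_mem huz, ?_⟩
  rw [map_add, hyu, sub_add_cancel_left, norm_neg]
  calc ‖expEnd (t • A) z‖ ≤ Real.exp (-(t * mm)) * ‖z‖ :=
        hA.norm_expEnd_smul_le_of_mem_iSup_eigenspace hdecay_neg hz
    _ ≤ Real.exp (-(t * mm)) * (‖M‖ * ‖u‖) := by gcongr; exact M.le_opNorm _
    _ ≤ Real.exp (-(t * mm)) * (‖M‖ * (Real.exp (-t * mp) * ‖y‖)) := by
        gcongr; exact hA.norm_expEnd_smul_le_of_mem_iSup_eigenspace hdecay_pos hy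
    _ = Real.exp (-(mp + mm) * t) * ‖M‖ * ‖y‖ := by
        rw [show -(mp + mm) * t = -(t * mm) + -t * mp by ring, Real.exp_add]; ring

/-- Let `A` be a symmetric endomorphism of `E` with at least one positive and one negative
eigenvalue and no zero eigenvalue, `U` the sum of the eigenspaces for positive eigenvalues,
`m₊(A)` and `m₋(A)` the smallest positive eigenvalues of `A` and `−A`.  If `V` is a subspace
with `dim U ≤ dim V` and `U ∩ V⊥ = 0`, and `M : U → U⊥` is the slope of `(U,V)`, then for
all `t ≥ 0`, `δ(U, exp(tA)V) ≤ e^{−(m₊(A)+m₋(A))t} ‖M‖`. -/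
theorem gap_exp_flow_decay (A : E →L[ℝ] E) (hA : IsSelfAdjoint A)
    (hpos : ∃ μ : ℝ, 0 < μ ∧ Module.End.HasEigenvalue (A : E →ₗ[ℝ] E) μ)
    (hneg : ∃ μ : ℝ, μ < 0 ∧ Module.End.HasEigenvalue (A : E →ₗ[ℝ] E) μ)
    (hzero : ¬ Module.End.HasEigenvalue (A : E →ₗ[ℝ] E) 0)
    (mp mm : ℝ)
    (hmp : IsLeast {μ : ℝ | 0 < μ ∧ Module.End.HasEigenvalue (A : E →ₗ[ℝ] E) μ} mp)
    (hmm : IsLeast {μ : ℝ | 0 < μ ∧ Module.End.HasEigenvalue (-(A : E →ₗ[ℝ] E)) μ} mm)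
    (V : Submodule ℝ E)
    (hdim : finrank ℝ (posSpace A) ≤ finrank ℝ V)
    (htrans : posSpace A ⊓ Vᗮ = ⊥)
    (M : ↥(posSpace A) →L[ℝ] ↥(posSpace A)ᗮ)
    (hM : Submodule.map (projCLM V : E →ₗ[ℝ] E) (posSpace A)
        = LinearMap.range (((posSpace A).subtypeL + (posSpace A)ᗮ.subtypeL.comp M : ↥(posSpace A) →L[ℝ] E) :
          ↥(posSpace A) →ₗ[ℝ] E))
    (t : ℝ) (ht : 0 ≤ t) :
    gap (posSpace A) (Submodule.map (expEnd (t • A) : E →ₗ[ℝ] E) V)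
      ≤ Real.exp (-(mp + mm) * t) * ‖M‖ :=
  gap_exp_flow_decay_general A hA hzero mp mm hmp hmm V M hM t ht
end
end

section
/- Let S ⊂ ℝ^N be a finite set and let d > k > 0 be integers with d ≥ 2(k+1)·|S| − 2. Then the linear map ev_{d,k} : 𝒫_d(ℝ^N, ℝ^ℓ) → ∏_{s ∈ S} 𝒫_k(ℝ^N, ℝ^ℓ) defined by f ↦ ( j_k(f, s) )_{s ∈ S} is surjective. -/
noncomputable section

open MvPolynomial

/-- The `k`-jet of a polynomial map at the point `s`: the truncation to total degree `≤ k`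
of the polynomial `y ↦ p(s + y)`, i.e. the degree-`≤ k` Taylor polynomial of `p` at `s`. -/
noncomputable def polyJet {N : ℕ} (k : ℕ) (s : Fin N → ℝ) (p : MvPolynomial (Fin N) ℝ) :
    MvPolynomial (Fin N) ℝ :=
  let q : MvPolynomial (Fin N) ℝ :=
    MvPolynomial.aeval (fun i => MvPolynomial.C (s i) + MvPolynomial.X i) p
  ∑ m ∈ q.support.filter fun m => (m.sum fun _ e => e) ≤ k,
    MvPolynomial.monomial m (q.coeff m)

namespace JetEvalAux

open scoped Classical

variable {N : ℕ}

/-- total degree of an exponent -/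
def mdeg (m : Fin N →₀ ℕ) : ℕ := m.sum fun _ e => e

lemma mdeg_add (m n : Fin N →₀ ℕ) : mdeg (m + n) = mdeg m + mdeg n :=
  Finsupp.sum_add_index' (fun _ => rfl) (fun _ _ _ => rfl)

lemma mdeg_eq_zero {m : Fin N →₀ ℕ} (h : mdeg m = 0) : m = 0 := by
  ext i
  by_cases hi : i ∈ m.support
  · have := (Finset.sum_eq_zero_iff).mp h i hi
    simpa using this
  · simpa using Finsupp.notMem_support_iff.mp hi

/-- the property that all coefficients in (strict) degree below `j` vanish -/
def LowZero (j : ℕ) (p : MvPolynomial (Fin N) ℝ) : Prop :=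
  ∀ m : Fin N →₀ ℕ, mdeg m < j → coeff m p = 0

lemma LowZero.mul {a b : ℕ} {p q : MvPolynomial (Fin N) ℝ}
    (hp : LowZero a p) (hq : LowZero b q) : LowZero (a + b) (p * q) := by
  intro m hm
  rw [coeff_mul]
  apply Finset.sum_eq_zero
  rintro ⟨u, v⟩ huv
  have h : u + v = m := Finset.HasAntidiagonal.mem_antidiagonal.mp huv
  have hlt : mdeg u + mdeg v < a + b := by rw [← mdeg_add, h]; exact hm
  by_cases h1 : mdeg u < a
  · simp [hp u h1]
  · have : mdeg v < b := by omega
    simp [hq v this]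

lemma LowZero.mul_right {a : ℕ} {p : MvPolynomial (Fin N) ℝ}
    (hp : LowZero a p) (q : MvPolynomial (Fin N) ℝ) : LowZero a (p * q) := by
  have hq : LowZero 0 q := fun m hm => absurd hm (by omega)
  simpa using hp.mul hq

lemma LowZero.mul_left {a : ℕ} {p : MvPolynomial (Fin N) ℝ}
    (hp : LowZero a p) (q : MvPolynomial (Fin N) ℝ) : LowZero a (q * p) := by
  rw [mul_comm]; exact hp.mul_right q

lemma LowZero.pow {p : MvPolynomial (Fin N) ℝ} (hp : LowZero 1 p) (n : ℕ) :
    LowZero n (p ^ n) := by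
  induction n with
  | zero => exact fun m hm => absurd hm (by omega)
  | succ n ih =>
    rw [pow_succ]
    exact ih.mul hp

lemma LowZero.add {a : ℕ} {p q : MvPolynomial (Fin N) ℝ}
    (hp : LowZero a p) (hq : LowZero a q) : LowZero a (p + q) := by
  intro m hm; rw [coeff_add, hp m hm, hq m hm, add_zero]

lemma LowZero.neg {a : ℕ} {p : MvPolynomial (Fin N) ℝ} (hp : LowZero a p) :
    LowZero a (-p) := by
  intro m hm; rw [coeff_neg, hp m hm, neg_zero]

lemma lowZero_one_of_coeff_zero {p : MvPolynomial (Fin N) ℝ} (h : coeff 0 p = 0) :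
    LowZero 1 p := by
  intro m hm
  have : m = 0 := mdeg_eq_zero (by omega)
  rwa [this]

/-- truncation to total degree at most `k` -/
def trunc (k : ℕ) (q : MvPolynomial (Fin N) ℝ) : MvPolynomial (Fin N) ℝ :=
  ∑ m ∈ q.support.filter fun m => (m.sum fun _ e => e) ≤ k,
    MvPolynomial.monomial m (q.coeff m)

lemma coeff_trunc (k : ℕ) (q : MvPolynomial (Fin N) ℝ) (m : Fin N →₀ ℕ) :
    coeff m (trunc k q) = if mdeg m ≤ k then coeff m q else 0 := by
  unfold trunc
  rw [MvPolynomial.coeff_sum]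
  simp only [coeff_monomial]
  rw [Finset.sum_ite_eq' (q.support.filter fun m => (m.sum fun _ e => e) ≤ k) m
    (fun m' => q.coeff m')]
  by_cases hdm : mdeg m ≤ k
  · by_cases hs : m ∈ q.support
    · rw [if_pos (Finset.mem_filter.mpr ⟨hs, hdm⟩), if_pos hdm]
    · rw [if_pos hdm, MvPolynomial.notMem_support_iff.mp hs, if_neg]
      intro hc
      exact hs (Finset.mem_filter.mp hc).1
  · rw [if_neg hdm, if_neg]
    intro hc
    exact hdm (Finset.mem_filter.mp hc).2

lemma totalDegree_trunc_le (k : ℕ) (q : MvPolynomial (Fin N) ℝ) :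
    (trunc k q).totalDegree ≤ k := by
  apply MvPolynomial.totalDegree_finsetSum_le
  intro m hm
  refine (MvPolynomial.totalDegree_monomial_le _ _).trans ?_
  exact (Finset.mem_filter.mp hm).2

lemma lowZero_sub_trunc (k : ℕ) (q : MvPolynomial (Fin N) ℝ) :
    LowZero (k + 1) (q - trunc k q) := by
  intro m hm
  rw [coeff_sub, coeff_trunc, if_pos (by omega), sub_self]

lemma trunc_eq_of (k : ℕ) (g q : MvPolynomial (Fin N) ℝ) (hg : g.totalDegree ≤ k)
    (h : ∀ m : Fin N →₀ ℕ, mdeg m ≤ k → coeff m q = coeff m g) : trunc k q = g := by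
  ext m
  rw [coeff_trunc]
  by_cases hdm : mdeg m ≤ k
  · rw [if_pos hdm, h m hdm]
  · rw [if_neg hdm]
    symm
    apply MvPolynomial.coeff_eq_zero_of_totalDegree_lt
    have : mdeg m = ∑ i ∈ m.support, m i := rfl
    omega

/-- the translation substitution `y ↦ t + y` -/
def tau (t : Fin N → ℝ) : MvPolynomial (Fin N) ℝ →ₐ[ℝ] MvPolynomial (Fin N) ℝ :=
  aeval fun i => C (t i) + X i

/-- the translation substitution `y ↦ y - t` -/
def sig (t : Fin N → ℝ) : MvPolynomial (Fin N) ℝ →ₐ[ℝ] MvPolynomial (Fin N) ℝ :=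
  aeval fun i => X i - C (t i)

lemma tau_sig (t : Fin N → ℝ) (p : MvPolynomial (Fin N) ℝ) : tau t (sig t p) = p := by
  have h : (tau t).comp (sig t) = AlgHom.id ℝ (MvPolynomial (Fin N) ℝ) := by
    apply MvPolynomial.algHom_ext
    intro i
    simp [tau, sig]
  calc tau t (sig t p) = ((tau t).comp (sig t)) p := rfl
    _ = p := by rw [h]; rfl

lemma coeff_zero_tau (t : Fin N → ℝ) (p : MvPolynomial (Fin N) ℝ) :
    coeff 0 (tau t p) = eval t p := by
  have h : (MvPolynomial.constantCoeff (σ := Fin N) (R := ℝ)).comp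
      ((tau t : MvPolynomial (Fin N) ℝ →ₐ[ℝ] MvPolynomial (Fin N) ℝ) :
        MvPolynomial (Fin N) ℝ →+* MvPolynomial (Fin N) ℝ) = eval t := by
    apply MvPolynomial.ringHom_ext
    · intro r; simp [tau]
    · intro i; simp [tau]
  have := congrArg (fun φ => φ p) h
  simpa [MvPolynomial.constantCoeff_eq] using this

lemma polyJet_eq (k : ℕ) (s : Fin N → ℝ) (p : MvPolynomial (Fin N) ℝ) :
    polyJet k s p = trunc k (tau s p) := rfl

lemma totalDegree_aeval_le (f : Fin N → MvPolynomial (Fin N) ℝ)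
    (hf : ∀ i, (f i).totalDegree ≤ 1) (p : MvPolynomial (Fin N) ℝ) :
    (aeval f p).totalDegree ≤ p.totalDegree := by
  conv_lhs => rw [p.as_sum]
  rw [map_sum]
  apply MvPolynomial.totalDegree_finsetSum_le
  intro m hm
  rw [aeval_monomial]
  refine (MvPolynomial.totalDegree_mul _ _).trans ?_
  have h1 : (algebraMap ℝ (MvPolynomial (Fin N) ℝ) (coeff m p)).totalDegree = 0 := by
    simp [MvPolynomial.algebraMap_eq]
  rw [h1, zero_add]
  have h2 : (m.prod fun i k => f i ^ k).totalDegree ≤ ∑ i ∈ m.support, m i := by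
    refine (MvPolynomial.totalDegree_finset_prod _ _).trans ?_
    apply Finset.sum_le_sum
    intro i _
    calc (f i ^ m i).totalDegree ≤ m i * (f i).totalDegree :=
          MvPolynomial.totalDegree_pow _ _
      _ ≤ m i * 1 := Nat.mul_le_mul_left _ (hf i)
      _ = m i := Nat.mul_one _
  refine h2.trans ?_
  exact MvPolynomial.le_totalDegree hm

/-- the linear polynomial `x ↦ ⟨x - s, t - s⟩`, vanishing at `s`, positive at `t ≠ s` -/
def lin (t s : Fin N → ℝ) : MvPolynomial (Fin N) ℝ :=
  ∑ i, C (t i - s i) * (X i - C (s i))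

def ee (t s : Fin N → ℝ) : ℝ := ∑ i, (t i - s i) * (t i - s i)

lemma eval_lin_self (t s : Fin N → ℝ) : eval t (lin t s) = ee t s := by
  simp [lin, ee]

lemma eval_lin_other (t s : Fin N → ℝ) : eval s (lin t s) = 0 := by
  simp [lin]

lemma ee_ne_zero {t s : Fin N → ℝ} (h : t ≠ s) : ee t s ≠ 0 := by
  intro h0
  apply h
  funext i
  have hnn : ∀ i ∈ (Finset.univ : Finset (Fin N)), 0 ≤ (t i - s i) * (t i - s i) :=
    fun i _ => mul_self_nonneg _
  have := (Finset.sum_eq_zero_iff_of_nonneg hnn).mp h0 i (Finset.mem_univ i)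
  have := mul_self_eq_zero.mp this
  linarith

lemma totalDegree_lin_le (t s : Fin N → ℝ) : (lin t s).totalDegree ≤ 1 := by
  apply MvPolynomial.totalDegree_finsetSum_le
  intro i _
  refine (MvPolynomial.totalDegree_mul _ _).trans ?_
  have h1 : (C (t i - s i) : MvPolynomial (Fin N) ℝ).totalDegree = 0 :=
    MvPolynomial.totalDegree_C _
  have h2 : ((X i - C (s i)) : MvPolynomial (Fin N) ℝ).totalDegree ≤ 1 := by
    refine (MvPolynomial.totalDegree_sub _ _).trans ?_
    simp [MvPolynomial.totalDegree_X]
  omega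

/-- the bump polynomial at `t` w.r.t. the finite set `S` -/
def Bp (k : ℕ) (S : Finset (Fin N → ℝ)) (t : Fin N → ℝ) : MvPolynomial (Fin N) ℝ :=
  ∏ s ∈ S.erase t, (C (ee t s)⁻¹ * lin t s) ^ (k + 1)

lemma eval_Bp_self (k : ℕ) (S : Finset (Fin N → ℝ)) (t : Fin N → ℝ) :
    eval t (Bp k S t) = 1 := by
  unfold Bp
  rw [map_prod]
  apply Finset.prod_eq_one
  intro s hs
  have hst : t ≠ s := fun h => (Finset.ne_of_mem_erase hs) h.symm
  rw [map_pow, map_mul, eval_C, eval_lin_self, inv_mul_cancel₀ (ee_ne_zero hst), one_pow]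

lemma totalDegree_Bp_le (k : ℕ) (S : Finset (Fin N → ℝ)) (t : Fin N → ℝ) :
    (Bp k S t).totalDegree ≤ (k + 1) * (S.erase t).card := by
  unfold Bp
  refine (MvPolynomial.totalDegree_finset_prod _ _).trans ?_
  calc ∑ s ∈ S.erase t, ((C (ee t s)⁻¹ * lin t s) ^ (k + 1)).totalDegree
      ≤ ∑ s ∈ S.erase t, (k + 1) := by
        apply Finset.sum_le_sum
        intro s _
        refine (MvPolynomial.totalDegree_pow _ _).trans ?_
        have : (C (ee t s)⁻¹ * lin t s).totalDegree ≤ 1 := by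
          refine (MvPolynomial.totalDegree_mul _ _).trans ?_
          have := totalDegree_lin_le t s
          have hC : (C (ee t s)⁻¹ : MvPolynomial (Fin N) ℝ).totalDegree = 0 :=
            MvPolynomial.totalDegree_C _
          omega
        calc (k + 1) * (C (ee t s)⁻¹ * lin t s).totalDegree ≤ (k + 1) * 1 :=
              Nat.mul_le_mul_left _ this
          _ = k + 1 := Nat.mul_one _
    _ = (k + 1) * (S.erase t).card := by
        rw [Finset.sum_const, smul_eq_mul, mul_comm]

/-- at a point `s ≠ t` of `S`, `tau s` of (`Bp t` times anything) has no low-order terms -/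
lemma lowZero_tau_Bp {k : ℕ} {S : Finset (Fin N → ℝ)} {t s : Fin N → ℝ}
    (hs : s ∈ S) (hst : s ≠ t) (z : MvPolynomial (Fin N) ℝ) :
    LowZero (k + 1) (tau s (Bp k S t * z)) := by
  have hmem : s ∈ S.erase t := Finset.mem_erase.mpr ⟨hst, hs⟩
  have hBp : Bp k S t = (C (ee t s)⁻¹ * lin t s) ^ (k + 1) *
      ∏ u ∈ (S.erase t).erase s, (C (ee t u)⁻¹ * lin t u) ^ (k + 1) :=
    (Finset.mul_prod_erase _ _ hmem).symm
  rw [hBp, mul_assoc, map_mul, map_pow]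
  have h1 : LowZero 1 (tau s (C (ee t s)⁻¹ * lin t s)) := by
    apply lowZero_one_of_coeff_zero
    rw [coeff_zero_tau, map_mul, eval_C, eval_lin_other, mul_zero]
  exact (h1.pow (k + 1)).mul_right _

/-- truncated geometric series inverting the bump to order `k` at `t` -/
def Rt (k : ℕ) (S : Finset (Fin N → ℝ)) (t : Fin N → ℝ) : MvPolynomial (Fin N) ℝ :=
  trunc k (∑ j ∈ Finset.range (k + 1), (1 - tau t (Bp k S t)) ^ j)

lemma totalDegree_Rt_le (k : ℕ) (S : Finset (Fin N → ℝ)) (t : Fin N → ℝ) :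
    (Rt k S t).totalDegree ≤ k := totalDegree_trunc_le _ _

end JetEvalAux

open JetEvalAux

/-- Let `S ⊂ ℝ^N` be finite and `d > k > 0` integers with `d ≥ 2(k+1)|S| − 2`.  The linear
evaluation map `𝒫_d(ℝ^N, ℝ^ℓ) → ∏_{s ∈ S} 𝒫_k(ℝ^N, ℝ^ℓ)`, `f ↦ (j_k(f,s))_{s ∈ S}`, is
surjective: every family of degree-`≤ k` jets at the points of `S` is realized by a
polynomial map of degree `≤ d`. -/
theorem jet_eval_surjective (N ℓ : ℕ) (hN : 1 ≤ N) (hℓ : 1 ≤ ℓ)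
    (S : Finset (Fin N → ℝ)) (d k : ℕ) (hk : 0 < k) (hkd : k < d)
    (hd : 2 * (k + 1) * S.card ≤ d + 2) :
    ∀ g : (Fin N → ℝ) → Fin ℓ → MvPolynomial (Fin N) ℝ,
      (∀ s ∈ S, ∀ i, (g s i).totalDegree ≤ k) →
      ∃ f : Fin ℓ → MvPolynomial (Fin N) ℝ,
        (∀ i, (f i).totalDegree ≤ d) ∧ ∀ s ∈ S, ∀ i, polyJet k s (f i) = g s i := by
  classical
  intro g hg
  refine ⟨fun i => ∑ t ∈ S, Bp k S t * sig t (g t i * Rt k S t), ?_, ?_⟩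
  · -- degree bound
    intro i
    apply MvPolynomial.totalDegree_finsetSum_le
    intro t ht
    refine (MvPolynomial.totalDegree_mul _ _).trans ?_
    have hB := totalDegree_Bp_le k S t
    have hcard : (S.erase t).card = S.card - 1 := Finset.card_erase_of_mem ht
    rw [hcard] at hB
    have hSpos : 1 ≤ S.card := Finset.card_pos.mpr ⟨t, ht⟩
    have hsig : (sig t (g t i * Rt k S t)).totalDegree ≤ 2 * k := by
      refine (totalDegree_aeval_le _ ?_ _).trans ?_
      · intro j
        refine (MvPolynomial.totalDegree_sub _ _).trans ?_
        simp [MvPolynomial.totalDegree_X]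
      · refine (MvPolynomial.totalDegree_mul _ _).trans ?_
        have h1 := hg t ht i
        have h2 := totalDegree_Rt_le k S t
        omega
    -- arithmetic: (k+1)*(card-1) + 2k ≤ d
    obtain ⟨c, hc⟩ : ∃ c, S.card = c + 1 := ⟨S.card - 1, by omega⟩
    rw [hc] at hd
    have harith : (k + 1) * (S.card - 1) + 2 * k ≤ d := by
      rw [hc]
      simp only [Nat.add_sub_cancel]
      nlinarith
    omega
  · -- jet condition
    intro s hs i
    rw [polyJet_eq]
    apply trunc_eq_of k (g s i) _ (hg s hs i)
    intro m hm
    rw [map_sum]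
    rw [← Finset.add_sum_erase _ _ hs]
    rw [MvPolynomial.coeff_add, MvPolynomial.coeff_sum]
    have hzero : ∀ t ∈ S.erase s,
        coeff m (tau s (Bp k S t * sig t (g t i * Rt k S t))) = 0 := by
      intro t ht
      have hts : s ≠ t := fun h => (Finset.ne_of_mem_erase ht) h.symm
      exact lowZero_tau_Bp hs hts _ m (by omega)
    rw [Finset.sum_eq_zero hzero, add_zero]
    -- main term
    rw [map_mul, tau_sig]
    set u : MvPolynomial (Fin N) ℝ := tau s (Bp k S s) with hu
    set w : MvPolynomial (Fin N) ℝ := 1 - u with hw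
    set G : MvPolynomial (Fin N) ℝ := ∑ j ∈ Finset.range (k + 1), w ^ j with hG
    have hRts : Rt k S s = trunc k G := by rw [hG, hw, hu]; rfl
    have hgeom : (1 - w) * G = 1 - w ^ (k + 1) := by
      have h := geom_sum_mul w (k + 1)
      rw [hG]
      linear_combination -h
    have hcu : coeff 0 u = 1 := by
      rw [hu, coeff_zero_tau, eval_Bp_self]
    have hlw : LowZero 1 w := by
      apply lowZero_one_of_coeff_zero
      rw [hw, MvPolynomial.coeff_sub, hcu]
      simp
    have hE : u * (g s i * Rt k S s) - g s i =
        -((G - trunc k G) * (u * g s i)) - g s i * w ^ (k + 1) := by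
      rw [hRts]
      have hu1 : u = 1 - w := by rw [hw]; ring
      calc u * (g s i * trunc k G) - g s i
          = (1 - w) * (g s i * trunc k G) - g s i := by rw [← hu1]
        _ = g s i * ((1 - w) * G) - g s i - (G - trunc k G) * ((1 - w) * g s i) := by ring
        _ = g s i * (1 - w ^ (k + 1)) - g s i - (G - trunc k G) * ((1 - w) * g s i) := by
            rw [hgeom]
        _ = -((G - trunc k G) * (u * g s i)) - g s i * w ^ (k + 1) := by rw [hu1]; ring
    have hlz : LowZero (k + 1) (u * (g s i * Rt k S s) - g s i) := by
      rw [hE, sub_eq_add_neg]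
      apply LowZero.add
      · exact ((lowZero_sub_trunc k G).mul_right _).neg
      · exact ((hlw.pow (k + 1)).mul_left _).neg
    have := hlz m (by omega)
    rw [MvPolynomial.coeff_sub] at this
    linarith
end
end
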